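/- arXiv:math/0701674 — 6 statements merged into one kernel-verified Lean document; each statement's English description precedes it below -/
import Mathlib

section
/- For any monic polynomial p of degree n ≥ 2 whose zeros all lie in the closed disc of radius A ≥ 1, and any j ≥ 1, the maximum of |p^{(j)}(z)/p(z)| over the circle |z| = 2A is at most n(n-1)⋯(n-j+1)/A^j, and in particular at most n^j/A^j. -/
/-!
Write `p = ∏ (X - α)` over its roots. The derivative of a product of linear factors is the sum
of the products omitting one factor, so by induction on `j` the value `p^{(j)}(z)` is a sum of
`n (n - 1) ⋯ (n - j + 1)` products, each omitting `j` of the factors `z - α` of `p(z)`. Every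
factor has `‖z - α‖ ≥ ‖z‖ - ‖α‖ ≥ A`, so each such product is at most `‖p(z)‖ / A ^ j`.
-/

open Polynomial

namespace Polynomial

variable {R : Type*}

theorem iterate_derivative_multiset_sum [Semiring R] (k : ℕ) (t : Multiset R[X]) :
    derivative^[k] t.sum = (t.map (derivative^[k] ·)).sum := by
  simpa only [Module.End.pow_apply] using map_multiset_sum (derivative ^ k) t

theorem derivative_multiset_prod_X_sub_C [CommRing R] [DecidableEq R] (s : Multiset R) :
    derivative (s.map (X - C ·)).prod = (s.map fun a => ((s.erase a).map (X - C ·)).prod).sum := by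
  simp [derivative_prod]

variable {𝕜 : Type*} [NormedField 𝕜]

theorem norm_eval_multiset_prod_X_sub_C (z : 𝕜) (s : Multiset 𝕜) :
    ‖eval z (s.map (X - C ·)).prod‖ = (s.map (‖z - ·‖)).prod := by
  simpa [eval_multiset_prod, Multiset.map_map, Function.comp_def] using
    map_multiset_prod (normHom (α := 𝕜)) (s.map (z - ·))

theorem norm_eval_iterate_derivative_multiset_prod_X_sub_C_mul_pow_le {A : ℝ} (hA : 0 ≤ A)
    {z : 𝕜} (k : ℕ) {s : Multiset 𝕜} (hs : ∀ a ∈ s, A ≤ ‖z - a‖) :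
    ‖eval z (derivative^[k] (s.map (X - C ·)).prod)‖ * A ^ k
      ≤ s.card.descFactorial k * (s.map (‖z - ·‖)).prod := by
  classical
  induction k generalizing s with
  | zero => simp [norm_eval_multiset_prod_X_sub_C]
  | succ k ih =>
    have hterm : ∀ a ∈ s,
        ‖eval z (derivative^[k] ((s.erase a).map (X - C ·)).prod)‖ * A ^ (k + 1)
          ≤ (s.card - 1).descFactorial k * (s.map (‖z - ·‖)).prod := by
      intro a ha
      have hprod : ((s.erase a).map (‖z - ·‖)).prod * A ≤ (s.map (‖z - ·‖)).prod := by
        rw [← Multiset.prod_map_erase ha, mul_comm]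
        exact mul_le_mul_of_nonneg_right (hs a ha)
          (Multiset.prod_map_nonneg fun _ _ => norm_nonneg _)
      have herase := ih (s := s.erase a) fun b hb => hs b (Multiset.mem_of_mem_erase hb)
      rw [Multiset.card_erase_of_mem ha, Nat.pred_eq_sub_one] at herase
      calc _ = ‖eval z (derivative^[k] ((s.erase a).map (X - C ·)).prod)‖ * A ^ k * A := by
            ring
        _ ≤ (s.card - 1).descFactorial k * ((s.erase a).map (‖z - ·‖)).prod * A := by gcongr
        _ ≤ _ := by rw [mul_assoc]; gcongr
    have hcard : (s.card : ℝ) * (s.card - 1).descFactorial k = s.card.descFactorial (k + 1) := by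
      rcases s.card with _ | m
      · simp
      · rw [Nat.add_sub_cancel, Nat.succ_descFactorial_succ]
        push_cast
        ring
    calc ‖eval z (derivative^[k + 1] (s.map (X - C ·)).prod)‖ * A ^ (k + 1)
        = ‖(s.map fun a => eval z (derivative^[k] ((s.erase a).map (X - C ·)).prod)).sum‖
            * A ^ (k + 1) := by
          rw [Function.iterate_succ_apply, derivative_multiset_prod_X_sub_C,
            iterate_derivative_multiset_sum, ← coe_evalRingHom, map_multiset_sum,
            Multiset.map_map, Multiset.map_map]
          rfl
      _ ≤ (s.map fun a =>
            ‖eval z (derivative^[k] ((s.erase a).map (X - C ·)).prod)‖ * A ^ (k + 1)).sum := by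
          rw [Multiset.sum_map_mul_right]
          gcongr
          exact (norm_multiset_sum_le _).trans_eq (by rw [Multiset.map_map]; rfl)
      _ ≤ s.card • ((s.card - 1).descFactorial k * (s.map (‖z - ·‖)).prod) := by
          simpa only [Multiset.card_map] using Multiset.sum_le_card_nsmul _ _
            (Multiset.forall_mem_map_iff.mpr hterm)
      _ = _ := by rw [nsmul_eq_mul, ← mul_assoc, hcard]

theorem norm_eval_iterate_derivative_div_eval_le {p : 𝕜[X]} (hmonic : p.Monic)
    (hsplit : p.Splits) {A : ℝ} (hA : 0 < A) {z : 𝕜} (hz : ∀ a ∈ p.roots, A ≤ ‖z - a‖)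
    (k : ℕ) :
    ‖eval z (derivative^[k] p) / eval z p‖ ≤ p.natDegree.descFactorial k / A ^ k := by
  have hp := hsplit.eq_prod_roots_of_monic hmonic
  have hbound := norm_eval_iterate_derivative_multiset_prod_X_sub_C_mul_pow_le hA.le k hz
  rw [← hp, splits_iff_card_roots.mp hsplit] at hbound
  have hnorm : ‖eval z p‖ = (p.roots.map (‖z - ·‖)).prod := by
    rw [hp, norm_eval_multiset_prod_X_sub_C, ← hp]
  have hpos : 0 < ‖eval z p‖ :=
    hnorm ▸ Multiset.prod_pos (Multiset.forall_mem_map_iff.mpr fun a ha => hA.trans_le (hz a ha))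
  rwa [norm_div, div_le_div_iff₀ hpos (by positivity), hnorm]

end Polynomial

theorem stmt1_general (p : Polynomial ℂ) (n : ℕ) (A : ℝ)
    (hmonic : p.Monic) (hdeg : p.natDegree = n) (hA : 1 ≤ A)
    (hroots : ∀ α ∈ p.roots, ‖α‖ ≤ A)
    (j : ℕ)
    (z : ℂ) (hz : ‖z‖ = 2 * A) :
    ‖(Polynomial.derivative^[j] p).eval z / p.eval z‖
      ≤ (Nat.descFactorial n j : ℝ) / A ^ j ∧
    ‖(Polynomial.derivative^[j] p).eval z / p.eval z‖
      ≤ (n : ℝ) ^ j / A ^ j := by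
  have hdist : ∀ α ∈ p.roots, A ≤ ‖z - α‖ := fun α hα => by
    linarith [norm_sub_norm_le z α, hroots α hα]
  have hbound := hdeg ▸ norm_eval_iterate_derivative_div_eval_le hmonic (IsAlgClosed.splits p)
    (by linarith) hdist j
  refine ⟨hbound, hbound.trans ?_⟩
  gcongr
  exact_mod_cast Nat.descFactorial_le_pow n j

theorem stmt1 (p : Polynomial ℂ) (n : ℕ) (A : ℝ)
    (hmonic : p.Monic) (hdeg : p.natDegree = n) (hn : 2 ≤ n) (hA : 1 ≤ A)
    (hroots : ∀ α ∈ p.roots, ‖α‖ ≤ A)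
    (j : ℕ) (hj : 1 ≤ j)
    (z : ℂ) (hz : ‖z‖ = 2 * A) :
    ‖(Polynomial.derivative^[j] p).eval z / p.eval z‖
      ≤ (Nat.descFactorial n j : ℝ) / A ^ j ∧
    ‖(Polynomial.derivative^[j] p).eval z / p.eval z‖
      ≤ (n : ℝ) ^ j / A ^ j :=
  stmt1_general p n A hmonic hdeg hA hroots j z hz
end

section
/- For any monic polynomial p of degree n ≥ 2 whose zeros all lie in the closed disc of radius A ≥ 1, and any j ≥ 1, the maximum over the circle |z| = 2A of |d/dz (p^{(j)}(z)/p(z))| is at most j · n^j / A^{j+1}. -/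
/-!
Write `p = ∏ (X - αᵢ)` over its roots. Since `p^{(j)} = j! ∑_{#T = j} ∏_{i ∉ T} (X - αᵢ)`, off the
roots `p^{(j)}/p = j! ∑_{#T = j} ∏_{i ∈ T} (w - αᵢ)⁻¹`. On `|z| = 2A` every `|z - αᵢ| ≥ A`, so each
factor `(z - αᵢ)⁻¹` has modulus at most `1/A` and its derivative `-(z - αᵢ)⁻²` at most `1/A²`.
The product rule then bounds the derivative of each of the `C(n, j)` summands by `j / A^{j+1}`, and
`j! C(n, j) ≤ n^j`.
-/

open Polynomial Finset

open scoped Nat Topology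

variable {ι : Type*} [DecidableEq ι]

theorem Finset.sum_powersetCard_sum_sdiff_insert {M : Type*} [AddCommMonoid M]
    (s : Finset ι) (j : ℕ) (f : Finset ι → M) :
    ∑ T ∈ s.powersetCard j, ∑ i ∈ s \ T, f (insert i T)
      = (j + 1) • ∑ S ∈ s.powersetCard (j + 1), f S := by
  have hcard : ∀ S ∈ s.powersetCard (j + 1), ∑ _i ∈ S, f S = (j + 1) • f S := fun S hS => by
    rw [sum_const, (mem_powersetCard.mp hS).2]
  rw [smul_sum, ← sum_congr rfl hcard, sum_sigma', sum_sigma']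
  refine sum_nbij' (fun x => ⟨insert x.2 x.1, x.2⟩) (fun x => ⟨x.1.erase x.2, x.2⟩)
    ?_ ?_ ?_ ?_ (fun _ _ => rfl)
  · rintro ⟨T, i⟩ h
    simp only [mem_sigma, mem_powersetCard, mem_sdiff] at h ⊢
    grind
  · rintro ⟨S, i⟩ h
    simp only [mem_sigma, mem_powersetCard, mem_sdiff] at h ⊢
    grind
  · rintro ⟨T, i⟩ h
    simp only [mem_sigma, mem_sdiff] at h
    simp [erase_insert h.2.2]
  · rintro ⟨S, i⟩ h
    simp only [mem_sigma] at h
    simp [insert_erase h.2]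

namespace Polynomial

theorem iterate_derivative_prod_X_sub_C_eq_sum_powersetCard {R : Type*} [CommRing R]
    (s : Finset ι) (α : ι → R) (k : ℕ) :
    derivative^[k] (∏ i ∈ s, (X - C (α i)))
      = k ! • ∑ T ∈ s.powersetCard k, ∏ i ∈ s \ T, (X - C (α i)) := by
  induction k with
  | zero => simp
  | succ k ih =>
    have hderiv : ∀ T : Finset ι, derivative (∏ i ∈ s \ T, (X - C (α i)))
        = ∑ i ∈ s \ T, ∏ l ∈ s \ insert i T, (X - C (α l)) := fun T => by
      simp only [derivative_prod_finset, derivative_X_sub_C, mul_one, sdiff_insert]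
    rw [Function.iterate_succ_apply', ih, derivative_smul, derivative_sum]
    simp only [hderiv]
    rw [sum_powersetCard_sum_sdiff_insert s k (fun S => ∏ l ∈ s \ S, (X - C (α l))), smul_smul,
      Nat.factorial_succ, mul_comm]

theorem eval_iterate_derivative_prod_X_sub_C_div {K : Type*} [Field K] (s : Finset ι)
    (α : ι → K) (k : ℕ) {w : K} (hw : ∀ i ∈ s, w ≠ α i) :
    eval w (derivative^[k] (∏ i ∈ s, (X - C (α i)))) / eval w (∏ i ∈ s, (X - C (α i)))
      = k ! * ∑ T ∈ s.powersetCard k, ∏ i ∈ T, (w - α i)⁻¹ := by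
  rw [iterate_derivative_prod_X_sub_C_eq_sum_powersetCard, eval_smul, eval_finsetSum,
    nsmul_eq_mul, mul_div_assoc, sum_div]
  congr 1
  refine sum_congr rfl fun T hT => ?_
  simp only [eval_prod, eval_sub, eval_X, eval_C]
  rw [← prod_sdiff (mem_powersetCard.mp hT).1, div_mul_cancel_left₀, prod_inv_distrib]
  exact prod_ne_zero_iff.mpr fun i hi => sub_ne_zero.mpr (hw i (sdiff_subset hi))

theorem Monic.eq_prod_toEnumFinset_roots {K : Type*} [Field K] [IsAlgClosed K] [DecidableEq K]
    {p : K[X]} (hp : p.Monic) : p = ∏ x ∈ p.roots.toEnumFinset, (X - C x.1) := by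
  conv_lhs => rw [(IsAlgClosed.splits p).eq_prod_roots_of_monic hp,
    ← Multiset.map_toEnumFinset_fst p.roots, Multiset.map_map]
  rfl

end Polynomial

section NormedField

variable {𝕜 : Type*} [NontriviallyNormedField 𝕜]

theorem norm_sum_prod_erase_mul_le (T : Finset ι) (g g' : ι → 𝕜) {a c : ℝ} (ha : 0 ≤ a)
    (hg : ∀ i ∈ T, ‖g i‖ ≤ a) (hg' : ∀ i ∈ T, ‖g' i‖ ≤ a * c) :
    ‖∑ i ∈ T, (∏ l ∈ T.erase i, g l) * g' i‖ ≤ #T * (a ^ #T * c) := by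
  have hterm : ∀ i ∈ T, ‖(∏ l ∈ T.erase i, g l) * g' i‖ ≤ a ^ #T * c := fun i hi => by
    have hprod : ‖∏ l ∈ T.erase i, g l‖ ≤ a ^ (#T - 1) := by
      rw [norm_prod, ← card_erase_of_mem hi, ← prod_const]
      exact prod_le_prod (fun _ _ => norm_nonneg _) fun l hl => hg l (mem_of_mem_erase hl)
    calc ‖(∏ l ∈ T.erase i, g l) * g' i‖ ≤ a ^ (#T - 1) * (a * c) := by
          rw [norm_mul]; exact mul_le_mul hprod (hg' i hi) (norm_nonneg _) (by positivity)
      _ = a ^ #T * c := by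
          rw [← mul_assoc, ← pow_succ, Nat.sub_add_cancel (card_pos.mpr ⟨i, hi⟩)]
  calc _ ≤ ∑ i ∈ T, ‖(∏ l ∈ T.erase i, g l) * g' i‖ := norm_sum_le _ _
    _ ≤ ∑ _i ∈ T, a ^ #T * c := sum_le_sum hterm
    _ = #T * (a ^ #T * c) := by rw [sum_const, nsmul_eq_mul]

theorem hasDerivAt_prod_inv_sub (T : Finset ι) (α : ι → 𝕜) {z : 𝕜} (hz : ∀ i ∈ T, z ≠ α i) :
    HasDerivAt (fun w => ∏ i ∈ T, (w - α i)⁻¹)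
      (∑ i ∈ T, (∏ l ∈ T.erase i, (z - α l)⁻¹) * -((z - α i)⁻¹ ^ 2)) z := by
  have hinv : ∀ i ∈ T, HasDerivAt (fun w => (w - α i)⁻¹) (-((z - α i)⁻¹ ^ 2)) z := fun i hi => by
    simpa [inv_pow, neg_div, one_div] using
      ((hasDerivAt_id z).sub_const (α i)).fun_inv (sub_ne_zero.mpr (hz i hi))
  simpa only [smul_eq_mul] using HasDerivAt.fun_finsetProd hinv

theorem norm_deriv_eval_iterate_derivative_prod_X_sub_C_div_le (s : Finset ι) (α : ι → 𝕜)
    (k : ℕ) {z : 𝕜} {A : ℝ} (hA : 0 < A) (hz : ∀ i ∈ s, A ≤ ‖z - α i‖) :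
    ‖deriv (fun w => eval w (derivative^[k] (∏ i ∈ s, (X - C (α i))))
        / eval w (∏ i ∈ s, (X - C (α i)))) z‖ ≤ k * #s ^ k / A ^ (k + 1) := by
  have hne : ∀ i ∈ s, z ≠ α i := fun i hi h => by
    have := hz i hi
    rw [h, sub_self, norm_zero] at this
    linarith
  have hinv : ∀ i ∈ s, ‖(z - α i)⁻¹‖ ≤ A⁻¹ := fun i hi => by
    rw [norm_inv]; exact inv_anti₀ hA (hz i hi)
  have heq : (fun w => eval w (derivative^[k] (∏ i ∈ s, (X - C (α i))))
        / eval w (∏ i ∈ s, (X - C (α i))))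
      =ᶠ[𝓝 z] fun w => k ! * ∑ T ∈ s.powersetCard k, ∏ i ∈ T, (w - α i)⁻¹ := by
    filter_upwards [(Filter.eventually_all_finset s).mpr fun i hi => eventually_ne_nhds (hne i hi)]
      with w hw
    exact eval_iterate_derivative_prod_X_sub_C_div s α k hw
  have hderiv := fun T (hT : T ∈ s.powersetCard k) =>
    hasDerivAt_prod_inv_sub T α fun i hi => hne i ((mem_powersetCard.mp hT).1 hi)
  rw [heq.deriv_eq, ((HasDerivAt.fun_sum hderiv).const_mul _).deriv]
  have hterm : ∀ T ∈ s.powersetCard k,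
      ‖∑ i ∈ T, (∏ l ∈ T.erase i, (z - α l)⁻¹) * -((z - α i)⁻¹ ^ 2)‖ ≤ k * (A⁻¹ ^ k * A⁻¹) :=
    fun T hT => by
      obtain ⟨hTs, rfl⟩ := mem_powersetCard.mp hT
      refine norm_sum_prod_erase_mul_le T _ _ (by positivity) (fun i hi => hinv i (hTs hi))
        fun i hi => ?_
      rw [norm_neg, norm_pow, sq]
      have := hinv i (hTs hi)
      gcongr
  have hfact : ‖(k ! : 𝕜)‖ ≤ k ! := by simpa using Nat.norm_cast_le (α := 𝕜) k !
  calc _ ≤ k ! * ∑ T ∈ s.powersetCard k,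
        ‖∑ i ∈ T, (∏ l ∈ T.erase i, (z - α l)⁻¹) * -((z - α i)⁻¹ ^ 2)‖ := by
        rw [norm_mul]
        exact mul_le_mul hfact (norm_sum_le _ _) (norm_nonneg _) (by positivity)
    _ ≤ k ! * ∑ _T ∈ s.powersetCard k, k * (A⁻¹ ^ k * A⁻¹) := by gcongr with T hT; exact hterm T hT
    _ = k * ((#s).choose k * k ! : ℝ) / A ^ (k + 1) := by
        rw [sum_const, card_powersetCard, nsmul_eq_mul, div_eq_mul_inv, ← inv_pow, pow_succ]
        ring
    _ ≤ k * #s ^ k / A ^ (k + 1) := by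
        gcongr
        exact (le_div_iff₀ (by positivity)).mp (Nat.choose_le_pow_div k #s)

end NormedField

theorem stmt2_general (p : Polynomial ℂ) (n : ℕ) (A : ℝ)
    (hmonic : p.Monic) (hdeg : p.natDegree = n) (hA : 1 ≤ A)
    (hroots : ∀ α ∈ p.roots, ‖α‖ ≤ A)
    (j : ℕ)
    (z : ℂ) (hz : ‖z‖ = 2 * A) :
    ‖deriv (fun w => (Polynomial.derivative^[j] p).eval w / p.eval w) z‖
      ≤ (j : ℝ) * (n : ℝ) ^ j / A ^ (j + 1) := by
  have hcard : #p.roots.toEnumFinset = n := by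
    rw [Multiset.card_toEnumFinset, IsAlgClosed.card_roots_eq_natDegree, hdeg]
  have hdist : ∀ x ∈ p.roots.toEnumFinset, A ≤ ‖z - x.1‖ := fun x hx => by
    have := hroots x.1 (Multiset.mem_of_mem_toEnumFinset hx)
    have := norm_sub_norm_le z x.1
    linarith
  have h := norm_deriv_eval_iterate_derivative_prod_X_sub_C_div_le _ Prod.fst j
    (by linarith) hdist
  rwa [← hmonic.eq_prod_toEnumFinset_roots, hcard] at h

theorem stmt2 (p : Polynomial ℂ) (n : ℕ) (A : ℝ)
    (hmonic : p.Monic) (hdeg : p.natDegree = n) (hn : 2 ≤ n) (hA : 1 ≤ A)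
    (hroots : ∀ α ∈ p.roots, ‖α‖ ≤ A)
    (j : ℕ) (hj : 1 ≤ j)
    (z : ℂ) (hz : ‖z‖ = 2 * A) :
    ‖deriv (fun w => (Polynomial.derivative^[j] p).eval w / p.eval w) z‖
      ≤ (j : ℝ) * (n : ℝ) ^ j / A ^ (j + 1) :=
  stmt2_general p n A hmonic hdeg hA hroots j z hz
end

section
/- For every j ≥ 1 there is a constant C'_j > 0 depending only on j such that for any monic polynomial p of degree n ≥ 2 with all zeros in the closed disc of radius A ≥ 1, the maximum over the circle |z| = 2A of |p^{(j)}(z)/p(z) − (p'(z)/p(z))^j| is at most C'_j · n^{j−1}/A^j. -/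
/-!
Write `w i = (z - αᵢ)⁻¹` over the roots `αᵢ` of `p`, counted with multiplicity. Then
`p⁽ʲ⁾(z) / p(z) = j! eⱼ(w)` and `p'(z) / p(z) = e₁(w)`, with `eⱼ` the elementary symmetric
polynomial, and `‖w i‖ ≤ A⁻¹` on `‖z‖ = 2A`. The power `e₁(w)ʲ` differs from `j! eⱼ(w)` only
by the monomials with a repeated index: from
`e₁ eⱼ = (j + 1) eⱼ₊₁ + ∑_{#t = j} (∑_{b ∈ t} w b) ∏_{i ∈ t} w i`
one gets by induction that the difference is at most `C(j, 2) nʲ⁻¹ Bʲ` when every `‖w i‖ ≤ B`.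
-/

open Polynomial Finset Nat

theorem Finset.sum_powersetCard_sum_sdiff_insert_s3 {ι M : Type*} [DecidableEq ι] [AddCommMonoid M]
    (u : Finset ι) (j : ℕ) (F : Finset ι → M) :
    ∑ t ∈ u.powersetCard j, ∑ b ∈ u \ t, F (insert b t)
      = (j + 1) • ∑ t ∈ u.powersetCard (j + 1), F t := by
  calc ∑ t ∈ u.powersetCard j, ∑ b ∈ u \ t, F (insert b t)
      = ∑ t ∈ u.powersetCard (j + 1), ∑ _b ∈ t, F t := by
        rw [sum_sigma', sum_sigma']
        refine sum_bij' (fun x _ => ⟨insert x.2 x.1, x.2⟩) (fun x _ => ⟨x.1.erase x.2, x.2⟩)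
          ?_ ?_ ?_ ?_ (fun _ _ => rfl)
        all_goals
          rintro ⟨t, b⟩ h
          simp only [mem_sigma, mem_powersetCard, mem_sdiff] at h ⊢
        · grind
        · grind
        · simp [erase_insert h.2.2]
        · simp [insert_erase h.2]
    _ = _ := by
        rw [smul_sum]
        exact sum_congr rfl fun t ht => by rw [sum_const, (mem_powersetCard.mp ht).2]

theorem Finset.sum_mul_sum_powersetCard_prod {ι R : Type*} [DecidableEq ι] [CommSemiring R]
    (u : Finset ι) (x : ι → R) (j : ℕ) :
    (∑ i ∈ u, x i) * ∑ t ∈ u.powersetCard j, ∏ i ∈ t, x i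
      = (j + 1) • ∑ t ∈ u.powersetCard (j + 1), ∏ i ∈ t, x i
        + ∑ t ∈ u.powersetCard j, (∑ b ∈ t, x b) * ∏ i ∈ t, x i := by
  have split : ∀ t ∈ u.powersetCard j, (∑ b ∈ u, x b) * ∏ i ∈ t, x i
      = ∑ b ∈ u \ t, ∏ i ∈ insert b t, x i + (∑ b ∈ t, x b) * ∏ i ∈ t, x i := by
    intro t ht
    rw [← sum_sdiff (mem_powersetCard.mp ht).1, add_mul, sum_mul]
    congr 1
    exact sum_congr rfl fun b hb => (prod_insert (mem_sdiff.mp hb).2).symm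
  rw [mul_sum, sum_congr rfl split, sum_add_distrib,
    sum_powersetCard_sum_sdiff_insert_s3 u j fun t => ∏ i ∈ t, x i]

section NormBounds

variable {ι : Type*} {B : ℝ}

theorem Finset.norm_sum_le_card_mul {E : Type*} [SeminormedAddCommGroup E] (u : Finset ι)
    {x : ι → E} (hx : ∀ i ∈ u, ‖x i‖ ≤ B) : ‖∑ i ∈ u, x i‖ ≤ #u * B :=
  (norm_sum_le_of_le u hx).trans_eq (by rw [sum_const, nsmul_eq_mul])

variable {𝕜 : Type*} [NormedCommRing 𝕜] [NormOneClass 𝕜] {x : ι → 𝕜}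

theorem Finset.norm_prod_le_pow_card (t : Finset ι) (hx : ∀ i ∈ t, ‖x i‖ ≤ B) :
    ‖∏ i ∈ t, x i‖ ≤ B ^ #t :=
  calc ‖∏ i ∈ t, x i‖ ≤ ∏ i ∈ t, ‖x i‖ := norm_prod_le t x
    _ ≤ ∏ _i ∈ t, B := prod_le_prod (fun _ _ => norm_nonneg _) hx
    _ = B ^ #t := prod_const B

theorem Finset.norm_sum_powersetCard_sum_mul_prod_le (u : Finset ι) (hB : 0 ≤ B)
    (hx : ∀ i ∈ u, ‖x i‖ ≤ B) (j : ℕ) :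
    ‖∑ t ∈ u.powersetCard j, (∑ b ∈ t, x b) * ∏ i ∈ t, x i‖
      ≤ (#u).choose j * (j * B ^ (j + 1)) := by
  rw [← card_powersetCard, ← nsmul_eq_mul]
  refine (norm_sum_le _ _).trans (sum_le_card_nsmul _ _ _ fun t ht => ?_)
  obtain ⟨htu, rfl⟩ := mem_powersetCard.mp ht
  have hxt : ∀ i ∈ t, ‖x i‖ ≤ B := fun i hi => hx i (htu hi)
  calc ‖(∑ b ∈ t, x b) * ∏ i ∈ t, x i‖ ≤ ‖∑ b ∈ t, x b‖ * ‖∏ i ∈ t, x i‖ := norm_mul_le _ _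
    _ ≤ (#t * B) * B ^ #t := mul_le_mul (t.norm_sum_le_card_mul hxt)
        (t.norm_prod_le_pow_card hxt) (norm_nonneg _) (by positivity)
    _ = #t * B ^ (#t + 1) := by ring

theorem Finset.norm_sum_pow_sub_factorial_mul_sum_powersetCard_prod_le [DecidableEq ι]
    (u : Finset ι) (hB : 0 ≤ B) (hx : ∀ i ∈ u, ‖x i‖ ≤ B) (j : ℕ) :
    ‖(∑ i ∈ u, x i) ^ j - j ! * ∑ t ∈ u.powersetCard j, ∏ i ∈ t, x i‖
      ≤ j.choose 2 * #u ^ (j - 1) * B ^ j := by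
  induction j with
  | zero => simp
  | succ j ih =>
    set w := ∑ i ∈ u, x i
    set R := ∑ t ∈ u.powersetCard j, (∑ b ∈ t, x b) * ∏ i ∈ t, x i
    have hrec : w ^ (j + 1) - ((j + 1)! : 𝕜) * ∑ t ∈ u.powersetCard (j + 1), ∏ i ∈ t, x i
        = w * (w ^ j - j ! * ∑ t ∈ u.powersetCard j, ∏ i ∈ t, x i) + j ! • R := by
      have := u.sum_mul_sum_powersetCard_prod x j
      rw [nsmul_eq_mul] at this ⊢
      push_cast [factorial_succ] at this ⊢
      linear_combination (j ! : 𝕜) * this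
    have hfact : (j ! : ℝ) * (#u).choose j ≤ #u ^ j := by
      exact_mod_cast (descFactorial_eq_factorial_mul_choose _ _).symm.trans_le
        (descFactorial_le_pow _ _)
    have hpow : (j.choose 2 : ℝ) * #u ^ (j - 1) * #u = j.choose 2 * #u ^ j := by
      rcases j with _ | j
      · simp
      · simp [pow_succ, mul_assoc]
    rw [hrec]
    calc _ ≤ ‖w‖ * ‖w ^ j - j ! * ∑ t ∈ u.powersetCard j, ∏ i ∈ t, x i‖ + j ! * ‖R‖ :=
          (norm_add_le _ _).trans (add_le_add (norm_mul_le _ _) norm_nsmul_le)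
      _ ≤ (#u * B) * (j.choose 2 * #u ^ (j - 1) * B ^ j)
            + j ! * ((#u).choose j * (j * B ^ (j + 1))) := by
          gcongr
          · exact u.norm_sum_le_card_mul hx
          · exact u.norm_sum_powersetCard_sum_mul_prod_le hB hx j
      _ = j.choose 2 * #u ^ j * B ^ (j + 1) + (j ! * (#u).choose j) * (j * B ^ (j + 1)) := by
          rw [← hpow]
          ring
      _ ≤ j.choose 2 * #u ^ j * B ^ (j + 1) + #u ^ j * (j * B ^ (j + 1)) := by gcongr
      _ = _ := by
          rw [choose_succ_succ', choose_one_right]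
          push_cast
          ring_nf

end NormBounds

theorem Polynomial.iterate_derivative_prod_X_sub_C_eq_sum_powersetCard_s3 {R ι : Type*} [CommRing R]
    [DecidableEq ι] (f : ι → R) (u : Finset ι) (j : ℕ) :
    derivative^[j] (∏ i ∈ u, (X - C (f i)))
      = (j ! : R[X]) * ∑ t ∈ u.powersetCard j, ∏ i ∈ u \ t, (X - C (f i)) := by
  induction j with
  | zero => simp
  | succ j ih =>
    have hderiv (t : Finset ι) : derivative (∏ i ∈ u \ t, (X - C (f i)))
        = ∑ b ∈ u \ t, ∏ i ∈ u \ insert b t, (X - C (f i)) := by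
      simp only [derivative_prod_finset, derivative_X_sub_C, mul_one, sdiff_insert]
    rw [Function.iterate_succ_apply', ih, derivative_natCast_mul, derivative_sum,
      sum_congr rfl fun t _ => hderiv t,
      sum_powersetCard_sum_sdiff_insert_s3 u j fun t => ∏ i ∈ u \ t, (X - C (f i)), nsmul_eq_mul,
      Nat.factorial_succ]
    push_cast
    ring

theorem Polynomial.eval_iterate_derivative_prod_X_sub_C_div_s3 {K ι : Type*} [Field K]
    [DecidableEq ι] (f : ι → K) (u : Finset ι) (j : ℕ) {z : K} (hz : ∀ i ∈ u, z ≠ f i) :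
    (derivative^[j] (∏ i ∈ u, (X - C (f i)))).eval z / (∏ i ∈ u, (X - C (f i))).eval z
      = j ! * ∑ t ∈ u.powersetCard j, ∏ i ∈ t, (z - f i)⁻¹ := by
  simp only [iterate_derivative_prod_X_sub_C_eq_sum_powersetCard_s3, eval_mul, eval_natCast,
    eval_finsetSum, eval_prod, eval_sub, eval_X, eval_C, mul_div_assoc, sum_div]
  congr 1
  refine sum_congr rfl fun t ht => ?_
  have hne : ∏ i ∈ u \ t, (z - f i) ≠ 0 :=
    prod_ne_zero_iff.mpr fun i hi => sub_ne_zero.mpr (hz i (mem_sdiff.mp hi).1)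
  rw [← prod_sdiff (mem_powersetCard.mp ht).1, div_mul_cancel_left₀ hne, prod_inv_distrib]

theorem Polynomial.Splits.eval_iterate_derivative_div_eval {K : Type*} [Field K] [DecidableEq K]
    {p : K[X]} (hs : p.Splits) (hm : p.Monic) (j : ℕ) {z : K} (hz : p.eval z ≠ 0) :
    (derivative^[j] p).eval z / p.eval z
      = j ! * ∑ t ∈ p.roots.toEnumFinset.powersetCard j, ∏ i ∈ t, (z - i.1)⁻¹ := by
  -- `toEnumFinset` gives the copies of a repeated root distinct indices.
  have hprod : p = ∏ i ∈ p.roots.toEnumFinset, (X - C i.1) := by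
    conv_lhs =>
      rw [hs.eq_prod_roots_of_monic hm, ← p.roots.map_toEnumFinset_fst, Multiset.map_map]
    rfl
  have hne : ∀ i ∈ p.roots.toEnumFinset, z ≠ i.1 := by
    rintro i hi rfl
    exact hz (isRoot_of_mem_roots (Multiset.mem_of_mem_toEnumFinset hi))
  conv_lhs => rw [hprod]
  exact eval_iterate_derivative_prod_X_sub_C_div_s3 _ _ j hne

theorem stmt3_general (j : ℕ) :
    ∃ C : ℝ, 0 < C ∧
      ∀ (p : Polynomial ℂ) (n : ℕ) (A : ℝ),
        p.Monic → p.natDegree = n → 2 ≤ n → 1 ≤ A →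
        (∀ α ∈ p.roots, ‖α‖ ≤ A) →
        ∀ z : ℂ, ‖z‖ = 2 * A →
          ‖(Polynomial.derivative^[j] p).eval z / p.eval z
              - ((Polynomial.derivative p).eval z / p.eval z) ^ j‖
            ≤ C * (n : ℝ) ^ (j - 1) / A ^ j := by
  refine ⟨j.choose 2 + 1, by positivity, ?_⟩
  intro p n A hm hdeg _ hA hroots z hz
  have hs : p.Splits := IsAlgClosed.splits p
  have hdist : ∀ α ∈ p.roots, A ≤ ‖z - α‖ := fun α hα => by
    linarith [norm_sub_norm_le z α, hroots α hα]
  have hz0 : p.eval z ≠ 0 := fun h0 => by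
    have := hdist z ((mem_roots hm.ne_zero).mpr h0)
    rw [sub_self, norm_zero] at this
    linarith
  have hw : ∀ i ∈ p.roots.toEnumFinset, ‖(z - i.1)⁻¹‖ ≤ A⁻¹ := fun i hi => by
    rw [norm_inv]
    exact inv_anti₀ (by linarith) (hdist i.1 (Multiset.mem_of_mem_toEnumFinset hi))
  have hlogderiv : (derivative p).eval z / p.eval z
      = ∑ i ∈ p.roots.toEnumFinset, (z - i.1)⁻¹ := by
    simpa [powersetCard_one] using hs.eval_iterate_derivative_div_eval hm 1 hz0
  have hcard : #p.roots.toEnumFinset = n := by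
    rw [Multiset.card_toEnumFinset, IsAlgClosed.card_roots_eq_natDegree, hdeg]
  rw [hs.eval_iterate_derivative_div_eval hm j hz0, hlogderiv, norm_sub_rev]
  refine (p.roots.toEnumFinset.norm_sum_pow_sub_factorial_mul_sum_powersetCard_prod_le
    (by positivity) hw j).trans ?_
  rw [hcard, inv_pow, ← div_eq_mul_inv]
  gcongr
  linarith

theorem stmt3 (j : ℕ) (hj : 1 ≤ j) :
    ∃ C : ℝ, 0 < C ∧
      ∀ (p : Polynomial ℂ) (n : ℕ) (A : ℝ),
        p.Monic → p.natDegree = n → 2 ≤ n → 1 ≤ A →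
        (∀ α ∈ p.roots, ‖α‖ ≤ A) →
        ∀ z : ℂ, ‖z‖ = 2 * A →
          ‖(Polynomial.derivative^[j] p).eval z / p.eval z
              - ((Polynomial.derivative p).eval z / p.eval z) ^ j‖
            ≤ C * (n : ℝ) ^ (j - 1) / A ^ j :=
  stmt3_general j
end

section
/- For every j ≥ 1 there exist a constant C''_j > 0 and an integer n(j) such that for every monic polynomial p of degree n ≥ n(j) with all zeros in the closed disc of radius A ≥ 1, the maximum over the circle |z| = 2A of |p^{(j)}(z)/p(z)| is at least C''_j · n^j / A^j. -/
/-!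
With `w = 1 / z`, the reversed polynomials `P(w) = w ^ n p(1 / w)` and
`Q(w) = w ^ (n - j) p⁽ʲ⁾(1 / w)` give `p⁽ʲ⁾(z) / p(z) = w ^ j Q(w) / P(w)`. If the roots of `p` lie in
`|z| < R`, then `P` has no zeros on `|w| ≤ 1 / R`, so by the maximum modulus principle `|Q / P|`
somewhere on `|w| = 1 / R` is at least its value `n (n - 1) ⋯ (n - j + 1)` at `w = 0`. This gives
`|p⁽ʲ⁾(z) / p(z)| ≥ n (n - 1) ⋯ (n - j + 1) / R ^ j` on `|z| = R`; take `R = 2A` and `n ≥ 2j`.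
-/

open Polynomial

namespace Polynomial

variable {K : Type*} [Field K]

theorem eval_reflect {N : ℕ} {f : K[X]} (hf : f.natDegree ≤ N) {u : K} (hu : u ≠ 0) :
    (reflect N f).eval u = u ^ N * f.eval u⁻¹ := by
  let := invertibleOfNonzero (inv_ne_zero hu)
  have h := eval₂_reflect_mul_pow (RingHom.id K) u⁻¹ N f hf
  rw [invOf_eq_inv, inv_inv, inv_pow] at h
  rw [eval, eval, ← h]
  field_simp

theorem eval_zero_reflect (N : ℕ) (f : K[X]) : (reflect N f).eval 0 = f.coeff N := by
  rw [← coeff_zero_eq_eval_zero, coeff_reflect, revAt_zero]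

end Polynomial

theorem Complex.exists_norm_eq_norm_eval_zero_div_le {P Q : ℂ[X]} {r : ℝ} (hr : 0 < r)
    (hP : ∀ u ∈ Metric.closedBall (0 : ℂ) r, P.eval u ≠ 0) :
    ∃ u : ℂ, ‖u‖ = r ∧ ‖Q.eval 0 / P.eval 0‖ ≤ ‖Q.eval u / P.eval u‖ := by
  have hd : DiffContOnCl ℂ (fun u => Q.eval u / P.eval u) (Metric.ball 0 r) := by
    refine DifferentiableOn.diffContOnCl ?_
    rw [closure_ball 0 hr.ne']
    exact Q.differentiable.differentiableOn.div P.differentiable.differentiableOn hP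
  obtain ⟨u, hu, hmax⟩ := exists_mem_frontier_isMaxOn_norm Metric.isBounded_ball
    (Metric.nonempty_ball.2 hr) hd
  rw [frontier_ball 0 hr.ne', mem_sphere_zero_iff_norm] at hu
  refine ⟨u, hu, hmax ?_⟩
  rw [closure_ball 0 hr.ne']
  exact Metric.mem_closedBall_self hr.le

theorem Nat.div_two_pow_le_descFactorial {n j : ℕ} (h : 2 * j ≤ n) :
    ((n : ℝ) / 2) ^ j ≤ n.descFactorial j := by
  calc ((n : ℝ) / 2) ^ j ≤ ((n + 1 - j : ℕ) : ℝ) ^ j := by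
        gcongr
        rw [Nat.cast_sub (by omega)]
        push_cast
        have : (2 * j : ℝ) ≤ n := by exact_mod_cast h
        linarith
    _ ≤ n.descFactorial j := by exact_mod_cast n.pow_sub_le_descFactorial j

theorem Polynomial.exists_norm_eq_descFactorial_div_pow_le_norm_iterate_derivative_div
    {p : ℂ[X]} (hp : p ≠ 0) {j : ℕ} (hj : j ≤ p.natDegree) {R : ℝ} (hR : 0 < R)
    (hroots : ∀ α ∈ p.roots, ‖α‖ < R) :
    ∃ z : ℂ, ‖z‖ = R ∧
      p.natDegree.descFactorial j / R ^ j ≤ ‖(derivative^[j] p).eval z / p.eval z‖ := by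
  set n := p.natDegree
  set D := derivative^[j] p
  have hD : D.natDegree ≤ n - j := natDegree_iterate_derivative p j
  have hlc : p.leadingCoeff ≠ 0 := leadingCoeff_ne_zero.2 hp
  have hP : ∀ u ∈ Metric.closedBall (0 : ℂ) R⁻¹, (reflect n p).eval u ≠ 0 := by
    intro u hu
    rcases eq_or_ne u 0 with rfl | hu0
    · rwa [eval_zero_reflect]
    rw [eval_reflect le_rfl hu0]
    refine mul_ne_zero (pow_ne_zero n hu0) fun hroot => ?_
    have hle : R ≤ ‖u⁻¹‖ := by
      rw [norm_inv]
      exact le_inv_of_le_inv₀ (norm_pos_iff.2 hu0) (mem_closedBall_zero_iff.1 hu)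
    exact (hroots _ ((mem_roots hp).2 hroot)).not_ge hle
  obtain ⟨u, hu, hle⟩ :=
    Complex.exists_norm_eq_norm_eval_zero_div_le (Q := reflect (n - j) D) (inv_pos.2 hR) hP
  have hu0 : u ≠ 0 := norm_pos_iff.1 (hu ▸ inv_pos.2 hR)
  refine ⟨u⁻¹, by rw [norm_inv, hu, inv_inv], ?_⟩
  have h0 : (reflect (n - j) D).eval 0 / (reflect n p).eval 0 = n.descFactorial j := by
    rw [eval_zero_reflect, eval_zero_reflect, coeff_iterate_derivative, Nat.sub_add_cancel hj,
      nsmul_eq_mul, mul_div_assoc, coeff_natDegree, div_self hlc, mul_one]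
  have hu' : (reflect (n - j) D).eval u / (reflect n p).eval u
      = u ^ (n - j) / u ^ n * (D.eval u⁻¹ / p.eval u⁻¹) := by
    rw [eval_reflect hD hu0, eval_reflect le_rfl hu0]
    ring
  rw [h0, hu', norm_mul, norm_div, norm_pow, norm_pow, hu, Complex.norm_natCast] at hle
  have hscale : R⁻¹ ^ (n - j) / R⁻¹ ^ n = R ^ j := by
    rw [inv_pow, inv_pow, inv_div_inv, div_eq_mul_inv, ← pow_sub₀ _ hR.ne' (Nat.sub_le n j),
      Nat.sub_sub_self hj]
  rwa [hscale, ← div_le_iff₀' (by positivity)] at hle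

theorem stmt6_general (j : ℕ) :
    ∃ C : ℝ, 0 < C ∧ ∃ N : ℕ,
      ∀ (p : Polynomial ℂ) (n : ℕ) (A : ℝ),
        p.Monic → p.natDegree = n → N ≤ n → 1 ≤ A →
        (∀ α ∈ p.roots, ‖α‖ ≤ A) →
        ∃ z : ℂ, ‖z‖ = 2 * A ∧
          C * (n : ℝ) ^ j / A ^ j
            ≤ ‖(Polynomial.derivative^[j] p).eval z / p.eval z‖ := by
  refine ⟨4⁻¹ ^ j, by positivity, 2 * j, ?_⟩
  rintro p n A hmonic rfl hn hA hroots
  have hA0 : 0 < A := by linarith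
  obtain ⟨z, hz, hle⟩ :=
    exists_norm_eq_descFactorial_div_pow_le_norm_iterate_derivative_div hmonic.ne_zero
      (j := j) (R := 2 * A) (by omega) (by positivity)
      fun α hα => (hroots α hα).trans_lt (by linarith)
  refine ⟨z, hz, le_trans ?_ hle⟩
  calc (4 : ℝ)⁻¹ ^ j * (p.natDegree : ℝ) ^ j / A ^ j
      = ((p.natDegree : ℝ) / 2) ^ j / (2 * A) ^ j := by
        rw [← mul_pow, ← div_pow, ← div_pow]
        congr 1
        field_simp
        ring
    _ ≤ p.natDegree.descFactorial j / (2 * A) ^ j := by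
        gcongr
        exact Nat.div_two_pow_le_descFactorial hn

theorem stmt6 (j : ℕ) (hj : 1 ≤ j) :
    ∃ C : ℝ, 0 < C ∧ ∃ N : ℕ,
      ∀ (p : Polynomial ℂ) (n : ℕ) (A : ℝ),
        p.Monic → p.natDegree = n → N ≤ n → 1 ≤ A →
        (∀ α ∈ p.roots, ‖α‖ ≤ A) →
        ∃ z : ℂ, ‖z‖ = 2 * A ∧
          C * (n : ℝ) ^ j / A ^ j
            ≤ ‖(Polynomial.derivative^[j] p).eval z / p.eval z‖ :=
  stmt6_general j
end

section
/- Let T = Σ_{j=1}^k Q_j D^j be a linear differential operator with polynomial coefficients satisfying deg Q_j ≤ j for all j, with equality for at least one j, and deg Q_k < k. Let j₀ be the largest j with deg Q_j = j. If p is a polynomial of degree n with T(p) = λ p for some λ ∈ ℂ, then λ = Σ_{j=1}^{j₀} q_{j,j} · n!/(n−j)!, where q_{j,j} is the coefficient of z^j in Q_j. -/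
/-!
Comparing the coefficients of `X ^ n` on both sides of `T p = λ p`, with `n = deg p`: since
`deg Q_j ≤ j`, the term `Q_j p^{(j)}` contributes to that coefficient only through the product of
the leading terms, `q_{j,j} X ^ j` and `n!/(n-j)! · lc(p) X ^ (n - j)`. Hence
`λ · lc(p) = (Σ_j q_{j,j} n!/(n-j)!) · lc(p)`, and `q_{j,j} = 0` for every `j > j₀`.
-/

open Polynomial

namespace Polynomial

variable {R : Type*} [Semiring R]

theorem coeff_mul_iterate_derivative_of_natDegree_le {Q p : R[X]} {j n : ℕ}
    (hQ : Q.natDegree ≤ j) (hp : p.natDegree ≤ n) :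
    (Q * derivative^[j] p).coeff n = Q.coeff j * (n.descFactorial j : R) * p.coeff n := by
  rcases le_or_gt j n with hjn | hnj
  · obtain ⟨m, rfl⟩ := Nat.exists_eq_add_of_le hjn
    have hD : (derivative^[j] p).natDegree ≤ m :=
      (natDegree_iterate_derivative p j).trans (by omega)
    rw [coeff_mul_add_eq_of_natDegree_le hQ hD, coeff_iterate_derivative, Nat.add_comm m j,
      nsmul_eq_mul, mul_assoc]
  · rw [iterate_derivative_eq_zero (hp.trans_lt hnj), Nat.descFactorial_eq_zero_iff_lt.mpr hnj]
    simp

theorem coeff_sum_mul_iterate_derivative_of_natDegree_le (s : Finset ℕ) {Q : ℕ → R[X]}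
    (hQ : ∀ j ∈ s, (Q j).natDegree ≤ j) {p : R[X]} {n : ℕ} (hp : p.natDegree ≤ n) :
    (∑ j ∈ s, Q j * derivative^[j] p).coeff n
      = (∑ j ∈ s, (Q j).coeff j * (n.descFactorial j : R)) * p.coeff n := by
  rw [finsetSum_coeff, Finset.sum_mul]
  exact Finset.sum_congr rfl fun j hj => coeff_mul_iterate_derivative_of_natDegree_le (hQ j hj) hp

theorem eq_sum_coeff_mul_descFactorial_of_sum_mul_iterate_derivative_eq_smul [IsDomain R]
    (s : Finset ℕ) {Q : ℕ → R[X]} (hQ : ∀ j ∈ s, (Q j).natDegree ≤ j) {p : R[X]} (hp : p ≠ 0)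
    {lam : R} (heig : ∑ j ∈ s, Q j * derivative^[j] p = lam • p) :
    lam = ∑ j ∈ s, (Q j).coeff j * (p.natDegree.descFactorial j : R) := by
  have hcoeff := coeff_sum_mul_iterate_derivative_of_natDegree_le s hQ le_rfl (p := p)
  rw [heig, coeff_smul, smul_eq_mul] at hcoeff
  exact mul_right_cancel₀ (leadingCoeff_ne_zero.mpr hp) hcoeff

end Polynomial

theorem stmt11_general (k : ℕ) (Q : ℕ → Polynomial ℂ)
    (hdegle : ∀ j ∈ Finset.Icc 1 k, (Q j).degree ≤ (j : ℕ))
    (j₀ : ℕ) (hj₀mem : j₀ ∈ Finset.Icc 1 k)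
    (hj₀max : ∀ j ∈ Finset.Icc 1 k, (Q j).degree = (j : ℕ) → j ≤ j₀)
    (p : Polynomial ℂ) (hp : p ≠ 0) (n : ℕ) (hn : p.natDegree = n) (lam : ℂ)
    (heig : ∑ j ∈ Finset.Icc 1 k, Q j * Polynomial.derivative^[j] p = lam • p) :
    lam = ∑ j ∈ Finset.Icc 1 j₀, (Q j).coeff j * (Nat.descFactorial n j : ℂ) := by
  subst hn
  rw [eq_sum_coeff_mul_descFactorial_of_sum_mul_iterate_derivative_eq_smul _
    (fun j hj => natDegree_le_of_degree_le (hdegle j hj)) hp heig]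
  have hsub : Finset.Icc 1 j₀ ⊆ Finset.Icc 1 k :=
    Finset.Icc_subset_Icc le_rfl (Finset.mem_Icc.mp hj₀mem).2
  refine (Finset.sum_subset hsub fun j hj hj' => ?_).symm
  have hj₀j : j₀ < j := by
    simp only [Finset.mem_Icc, not_and, not_le] at hj hj'
    exact hj' hj.1
  have hQj : (Q j).degree < (j : ℕ) :=
    (hdegle j hj).lt_of_ne fun h => (hj₀max j hj h).not_gt hj₀j
  rw [coeff_eq_zero_of_degree_lt hQj, zero_mul]

theorem stmt11 (k : ℕ) (hk : 1 ≤ k) (Q : ℕ → Polynomial ℂ)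
    (hdegle : ∀ j ∈ Finset.Icc 1 k, (Q j).degree ≤ (j : ℕ))
    (hdegk : (Q k).degree < (k : ℕ))
    (j₀ : ℕ) (hj₀mem : j₀ ∈ Finset.Icc 1 k) (hj₀deg : (Q j₀).degree = (j₀ : ℕ))
    (hj₀max : ∀ j ∈ Finset.Icc 1 k, (Q j).degree = (j : ℕ) → j ≤ j₀)
    (p : Polynomial ℂ) (hp : p ≠ 0) (n : ℕ) (hn : p.natDegree = n) (lam : ℂ)
    (heig : ∑ j ∈ Finset.Icc 1 k, Q j * Polynomial.derivative^[j] p = lam • p) :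
    lam = ∑ j ∈ Finset.Icc 1 j₀, (Q j).coeff j * (Nat.descFactorial n j : ℂ) :=
  stmt11_general k Q hdegle j₀ hj₀mem hj₀max p hp n hn lam heig
end

section
/- Let T = Σ_{j=1}^k Q_j D^j be a degenerate exactly-solvable operator, j₀ the largest j with deg Q_j = j, and d = max_{j₀ < j ≤ k} (j − j₀)/(j − deg Q_j). Suppose for each n the monic eigenpolynomial p_n of degree n exists, and let r_n be the maximum modulus of the roots of p_n. Then there is a constant c > 0 with liminf_{n→∞} r_n/n^d ≥ c; equivalently, there exist s > 0 and N such that for all n ≥ N, p_n has a root of modulus greater than s·n^d. -/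
/-!
Suppose every root of `p n` has modulus at most `ε n ^ d / (5 k)`, and evaluate the eigen-equation,
multiplied by `x ^ k`, at `x = ε n ^ d`. For each root `a` the factor `x / (x - a)` is then close
to `1`, and `x ^ j p⁽ʲ⁾(x) / p(x)` is a sum of `n (n - 1) ⋯ (n - j + 1)` products of `j` such
factors, so it lies between half and three halves of that count. With `m j = j - deg Q j`, the
`j`-th term therefore has size about `ε ^ (k - m j) n ^ (d k + j - d m j) |p(x)|`, while the
eigenvalue is `O(n ^ j₀)` and its term is at most of size `ε ^ k n ^ (d k + j₀) |p(x)|`. The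
definition of `d` says `j - d m j ≤ j₀` for all `j`, with equality for some `j` with `m j > 0`;
among those, the index with the largest `m j` gives a term exceeding each of the others by a
factor `1 / ε` for large `n`. For `ε` small this contradicts the eigen-equation.
-/

open Polynomial Filter Topology Bornology Asymptotics

theorem Polynomial.iterate_derivative_X_sub_C_mul {R : Type*} [CommRing R] (a : R) (q : R[X])
    (j : ℕ) : derivative^[j + 1] ((X - C a) * q) =
      (X - C a) * derivative^[j + 1] q + (j + 1) • derivative^[j] q := by
  induction j with
  | zero =>
    simp only [zero_add, Function.iterate_one, Function.iterate_zero, id_eq, derivative_mul,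
      derivative_sub, derivative_X, derivative_C, sub_zero, one_mul, one_smul]
    ring
  | succ j ih =>
    rw [Function.iterate_succ_apply', ih, derivative_add, derivative_mul, derivative_smul,
      ← Function.iterate_succ_apply' derivative, ← Function.iterate_succ_apply' derivative]
    simp only [derivative_sub, derivative_X, derivative_C, sub_zero, one_mul, add_smul, one_smul]
    ring

theorem Nat.add_one_descFactorial_add_one_eq_add (n j : ℕ) :
    (n + 1).descFactorial (j + 1) = n.descFactorial (j + 1) + (j + 1) * n.descFactorial j := by
  rw [Nat.succ_descFactorial_succ, Nat.descFactorial_succ, ← Nat.add_mul]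
  rcases le_or_gt j n with h | h
  · congr 1; omega
  · simp [Nat.descFactorial_eq_zero_iff_lt.2 h]

theorem Polynomial.norm_pow_mul_eval_iterate_derivative_multiset_prod_sub_le {𝕜 : Type*}
    [RCLike 𝕜] {u : ℝ} (hu : 0 ≤ u) {x : 𝕜} (s : Multiset 𝕜) (hs : ∀ a ∈ s, ‖a‖ ≤ u * ‖x - a‖)
    (j : ℕ) :
    ‖x ^ j * (derivative^[j] (s.map (X - C ·)).prod).eval x
        - (s.card.descFactorial j : 𝕜) * (s.map (X - C ·)).prod.eval x‖
      ≤ ((1 + u) ^ j - 1) * s.card.descFactorial j * ‖(s.map (X - C ·)).prod.eval x‖ := by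
  induction s using Multiset.induction_on generalizing j with
  | empty => cases j <;> simp
  | cons a s ih =>
    rcases j with _ | j
    · simp
    have ha : ‖a‖ ≤ u * ‖x - a‖ := hs a (Multiset.mem_cons_self a s)
    have hx : ‖x‖ ≤ (1 + u) * ‖x - a‖ := by
      linarith [norm_le_norm_sub_add x a, norm_sub_rev x a]
    set P := (s.map (X - C ·)).prod
    set n := s.card
    set E : ℕ → 𝕜 := fun i ↦ x ^ i * (derivative^[i] P).eval x - (n.descFactorial i : 𝕜) * P.eval x
    have hE (i : ℕ) : ‖E i‖ ≤ ((1 + u) ^ i - 1) * n.descFactorial i * ‖P.eval x‖ :=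
      ih (fun b hb ↦ hs b (Multiset.mem_cons_of_mem hb)) i
    have hrec : x ^ (j + 1) * (derivative^[j + 1] ((X - C a) * P)).eval x
          - ((n + 1).descFactorial (j + 1) : 𝕜) * ((X - C a) * P).eval x
        = (x - a) * E (j + 1) + (j + 1 : 𝕜) * x * E j
          + (j + 1 : 𝕜) * n.descFactorial j * a * P.eval x := by
      simp only [E, iterate_derivative_X_sub_C_mul, Nat.add_one_descFactorial_add_one_eq_add,
        nsmul_eq_mul, Nat.cast_add, Nat.cast_one, Nat.cast_mul, eval_add, eval_mul, eval_sub,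
        eval_X, eval_C, eval_natCast, eval_one]
      ring
    have hj : ‖(j + 1 : 𝕜)‖ = j + 1 := by exact_mod_cast RCLike.norm_natCast (K := 𝕜) (j + 1)
    have hpow : 0 ≤ (1 + u) ^ j - 1 := by linarith [one_le_pow₀ (n := j) (by linarith : 1 ≤ 1 + u)]
    simp only [Multiset.map_cons, Multiset.prod_cons, Multiset.card_cons]
    rw [hrec, Nat.add_one_descFactorial_add_one_eq_add, eval_mul, norm_mul (eval x _)]
    simp only [eval_sub, eval_X, eval_C]
    calc _ ≤ ‖x - a‖ * ‖E (j + 1)‖ + (j + 1) * ‖x‖ * ‖E j‖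
            + (j + 1) * n.descFactorial j * ‖a‖ * ‖P.eval x‖ := by
          refine (norm_add₃_le ..).trans ?_
          simp only [norm_mul, hj, RCLike.norm_natCast, le_refl]
      _ ≤ ‖x - a‖ * (((1 + u) ^ (j + 1) - 1) * n.descFactorial (j + 1) * ‖P.eval x‖)
            + (j + 1) * ((1 + u) * ‖x - a‖) * (((1 + u) ^ j - 1) * n.descFactorial j * ‖P.eval x‖)
            + (j + 1) * n.descFactorial j * (u * ‖x - a‖) * ‖P.eval x‖ := by
          gcongr <;> exact hE _
      _ = _ := by push_cast; ring

theorem Polynomial.Monic.norm_pow_mul_eval_iterate_derivative_sub_le {p : ℂ[X]} (hp : p.Monic)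
    {u : ℝ} (hu : 0 ≤ u) {x : ℂ} (hroots : ∀ a ∈ p.roots, ‖a‖ ≤ u * ‖x - a‖) (j : ℕ) :
    ‖x ^ j * (derivative^[j] p).eval x - (p.natDegree.descFactorial j : ℂ) * p.eval x‖
      ≤ ((1 + u) ^ j - 1) * p.natDegree.descFactorial j * ‖p.eval x‖ := by
  have h := norm_pow_mul_eval_iterate_derivative_multiset_prod_sub_le hu p.roots hroots j
  rwa [prod_multiset_X_sub_C_of_monic_of_roots_card_eq hp IsAlgClosed.card_roots_eq_natDegree,
    IsAlgClosed.card_roots_eq_natDegree] at h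

theorem Polynomial.Monic.norm_pow_mul_eval_iterate_derivative_sub_le_half {p : ℂ[X]}
    (hp : p.Monic) {k : ℕ} (hk : 0 < k) {x : ℂ} (hroots : ∀ a ∈ p.roots, 5 * k * ‖a‖ ≤ ‖x‖)
    {j : ℕ} (hj : j ≤ k) :
    ‖x ^ j * (derivative^[j] p).eval x - (p.natDegree.descFactorial j : ℂ) * p.eval x‖
      ≤ p.natDegree.descFactorial j * ‖p.eval x‖ / 2 := by
  have hk1 : (1 : ℝ) ≤ k := by exact_mod_cast hk
  set u : ℝ := 1 / (4 * k)
  have hu : 0 ≤ u := by positivity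
  have hroots' : ∀ a ∈ p.roots, ‖a‖ ≤ u * ‖x - a‖ := by
    intro a ha
    have := hroots a ha
    rw [div_mul_eq_mul_div, one_mul, le_div_iff₀ (by positivity)]
    nlinarith [norm_sub_norm_le x a, norm_nonneg a]
  have hpow : (1 + u) ^ j ≤ 3 / 2 := calc
    (1 + u) ^ j ≤ (1 + u) ^ k := pow_le_pow_right₀ (by linarith) hj
    _ ≤ Real.exp u ^ k := by gcongr; linarith [Real.add_one_le_exp u]
    _ = Real.exp (1 / 4) := by rw [← Real.exp_nat_mul]; congr 1; simp only [u]; field_simp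
    _ ≤ 1 / (1 - 1 / 4) := Real.exp_bound_div_one_sub_of_interval (by norm_num) (by norm_num)
    _ ≤ 3 / 2 := by norm_num
  refine (hp.norm_pow_mul_eval_iterate_derivative_sub_le hu hroots' j).trans ?_
  have hhalf : (1 + u) ^ j - 1 ≤ 1 / 2 := by linarith
  rw [mul_assoc]
  exact (mul_le_mul_of_nonneg_right hhalf (by positivity)).trans_eq (by ring)

theorem Polynomial.Monic.norm_pow_mul_eval_iterate_derivative_le {p : ℂ[X]} (hp : p.Monic)
    {k : ℕ} (hk : 0 < k) {x : ℂ} (hroots : ∀ a ∈ p.roots, 5 * k * ‖a‖ ≤ ‖x‖) {j : ℕ}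
    (hj : j ≤ k) :
    ‖x ^ j * (derivative^[j] p).eval x‖ ≤ 3 / 2 * ((p.natDegree : ℝ) ^ j * ‖p.eval x‖) := by
  have := norm_le_norm_sub_add (x ^ j * (derivative^[j] p).eval x)
    ((p.natDegree.descFactorial j : ℂ) * p.eval x)
  rw [norm_mul (p.natDegree.descFactorial j : ℂ), Complex.norm_natCast] at this
  have : (p.natDegree.descFactorial j : ℝ) ≤ (p.natDegree : ℝ) ^ j := by
    exact_mod_cast Nat.descFactorial_le_pow _ j
  nlinarith [hp.norm_pow_mul_eval_iterate_derivative_sub_le_half hk hroots hj,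
    norm_nonneg (p.eval x)]

theorem Polynomial.Monic.le_norm_pow_mul_eval_iterate_derivative {p : ℂ[X]} (hp : p.Monic)
    {k : ℕ} (hk : 0 < k) {x : ℂ} (hroots : ∀ a ∈ p.roots, 5 * k * ‖a‖ ≤ ‖x‖) {j : ℕ}
    (hj : j ≤ k) (hfac : (p.natDegree : ℝ) ^ j / 2 ≤ p.natDegree.descFactorial j) :
    (p.natDegree : ℝ) ^ j / 4 * ‖p.eval x‖ ≤ ‖x ^ j * (derivative^[j] p).eval x‖ := by
  have := norm_sub_norm_le ((p.natDegree.descFactorial j : ℂ) * p.eval x)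
    (x ^ j * (derivative^[j] p).eval x)
  rw [norm_mul (p.natDegree.descFactorial j : ℂ), Complex.norm_natCast, norm_sub_rev] at this
  nlinarith [hp.norm_pow_mul_eval_iterate_derivative_sub_le_half hk hroots hj,
    norm_nonneg (p.eval x)]

theorem Asymptotics.IsEquivalent.eventually_norm_le_and_le {α β : Type*}
    [NormedAddCommGroup β] {u v : α → β} {l : Filter α} (h : u ~[l] v) :
    ∀ᶠ x in l, ‖v x‖ / 2 ≤ ‖u x‖ ∧ ‖u x‖ ≤ 2 * ‖v x‖ := by
  filter_upwards [h.isLittleO.bound (by norm_num : (0 : ℝ) < 1 / 2)] with x hx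
  simp only [Pi.sub_apply] at hx
  constructor <;> linarith [norm_sub_norm_le (u x) (v x), norm_sub_norm_le (v x) (u x),
    norm_sub_rev (u x) (v x), norm_nonneg (v x)]

theorem Polynomial.eventually_norm_eval_le_and_le {R : Type*} [NormedRing R] [NormOneClass R]
    [NormMulClass R] (P : R[X]) : ∀ᶠ x in cobounded R,
      ‖P.leadingCoeff‖ * ‖x‖ ^ P.natDegree / 2 ≤ ‖P.eval x‖ ∧
        ‖P.eval x‖ ≤ 2 * (‖P.leadingCoeff‖ * ‖x‖ ^ P.natDegree) := by
  simpa only [norm_mul, norm_pow] using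
    (isEquivalent_cobounded_leading_monomial (P := P)).eventually_norm_le_and_le

theorem Nat.eventually_pow_div_two_le_descFactorial (j : ℕ) :
    ∀ᶠ n : ℕ in atTop, (n : ℝ) ^ j / 2 ≤ n.descFactorial j := by
  have hn : Tendsto (fun n : ℕ ↦ (n : ℝ)) atTop (cobounded ℝ) :=
    tendsto_norm_atTop_iff_cobounded.mp <| by
      simpa using tendsto_natCast_atTop_atTop (R := ℝ)
  filter_upwards [hn.eventually (descPochhammer ℝ j).eventually_norm_eval_le_and_le] with n hn
  simpa [monic_descPochhammer, descPochhammer_natDegree, descPochhammer_eval_eq_descFactorial]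
    using hn.1

theorem mul_rpow_pow_mul_pow_eq {ε d n : ℝ} (hn : 0 < n) (a b : ℕ) :
    (ε * n ^ d) ^ a * n ^ b = ε ^ a * n ^ (d * a + b) := by
  rw [mul_pow, ← Real.rpow_natCast (n ^ d), ← Real.rpow_mul hn.le, Real.rpow_add hn,
    Real.rpow_natCast, mul_assoc]

theorem eventually_mul_rpow_pow_mul_pow_le {ε d : ℝ} (hε0 : 0 < ε) (hε1 : ε ≤ 1)
    {u v u' v' : ℕ} (hle : d * u + v ≤ d * u' + v') (hlt : d * u + v < d * u' + v' ∨ u' < u) :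
    ∀ᶠ n : ℕ in atTop,
      (ε * (n : ℝ) ^ d) ^ u * (n : ℝ) ^ v ≤ ε * ((ε * (n : ℝ) ^ d) ^ u' * (n : ℝ) ^ v') := by
  suffices ∀ᶠ n : ℕ in atTop, 1 ≤ n → ε ^ u * (n : ℝ) ^ (d * u + v) ≤
      ε ^ (u' + 1) * (n : ℝ) ^ (d * u' + v') by
    filter_upwards [this, eventually_ge_atTop 1] with n hn hn1
    have hn0 : (0 : ℝ) < n := by exact_mod_cast hn1
    rw [mul_rpow_pow_mul_pow_eq hn0, mul_rpow_pow_mul_pow_eq hn0, ← mul_assoc, ← pow_succ']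
    exact hn hn1
  rcases hlt with hlt | hlt
  · have hγ : Tendsto (fun n : ℕ ↦ (n : ℝ) ^ (d * u + v - (d * u' + v'))) atTop (𝓝 0) := by
      have h := (tendsto_rpow_neg_atTop (y := d * u' + v' - (d * u + v)) (by linarith)).comp
        tendsto_natCast_atTop_atTop
      rwa [neg_sub] at h
    filter_upwards [hγ.eventually (ge_mem_nhds (by positivity : 0 < ε ^ (u' + 1) / ε ^ u))]
      with n hn hn1
    have hn0 : (0 : ℝ) < n := by exact_mod_cast hn1
    rw [le_div_iff₀' (by positivity)] at hn
    calc ε ^ u * (n : ℝ) ^ (d * u + v)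
        = ε ^ u * (n : ℝ) ^ (d * u + v - (d * u' + v')) * (n : ℝ) ^ (d * u' + v') := by
          rw [mul_assoc, ← Real.rpow_add hn0, sub_add_cancel]
      _ ≤ ε ^ (u' + 1) * (n : ℝ) ^ (d * u' + v') := by gcongr
  · filter_upwards with n hn1
    have hn1 : (1 : ℝ) ≤ n := by exact_mod_cast hn1
    exact mul_le_mul (pow_le_pow_of_le_one hε0.le hε1 hlt)
      (Real.rpow_le_rpow_of_exponent_le hn1 hle) (by positivity) (by positivity)

theorem Finset.exists_sub_mul_eq_and_forall_lt {J : Finset ℕ} {m : ℕ → ℝ} {d c : ℝ}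
    (hex : ∃ j ∈ J, j - d * m j = c ∧ 0 < m j) :
    ∃ js ∈ J, js - d * m js = c ∧ 0 < m js ∧
      ∀ j ∈ J, j - d * m j = c → j ≠ js → m j < m js := by
  obtain ⟨j₁, hj₁, hj₁c, hj₁m⟩ := hex
  obtain ⟨js, hjs, hmax⟩ := (J.filter fun j ↦ j - d * m j = c).exists_max_image m
    ⟨j₁, Finset.mem_filter.2 ⟨hj₁, hj₁c⟩⟩
  obtain ⟨hjsJ, hjsc⟩ := Finset.mem_filter.1 hjs
  refine ⟨js, hjsJ, hjsc, hj₁m.trans_le (hmax j₁ (Finset.mem_filter.2 ⟨hj₁, hj₁c⟩)), ?_⟩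
  intro j hj hjc hne
  refine (hmax j (Finset.mem_filter.2 ⟨hj, hjc⟩)).lt_of_ne fun heq ↦ hne ?_
  have : d * m j = d * m js := by rw [heq]
  exact_mod_cast (show (j : ℝ) = js by linarith)

section
variable {R : Type*} [Semiring R] {k j₀ : ℕ} {Q : ℕ → R[X]} {d : ℝ}

theorem natDegree_lt_of_lt_of_degree_le
    (hdegle : ∀ j ∈ Finset.Icc 1 k, (Q j).degree ≤ (j : ℕ))
    (hj₀max : ∀ j ∈ Finset.Icc 1 k, (Q j).degree = (j : ℕ) → j ≤ j₀)
    {j : ℕ} (hj₀ : j₀ < j) (hjk : j ≤ k) (hQ : Q j ≠ 0) : (Q j).natDegree < j := by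
  have hj : j ∈ Finset.Icc 1 k := Finset.mem_Icc.2 ⟨by omega, hjk⟩
  refine (natDegree_le_of_degree_le (hdegle j hj)).lt_of_ne fun h ↦ ?_
  exact (hj₀max j hj (by rw [degree_eq_natDegree hQ, h])).not_gt hj₀

theorem exists_dominant_index
    (hdegle : ∀ j ∈ Finset.Icc 1 k, (Q j).degree ≤ (j : ℕ))
    (hj₀max : ∀ j ∈ Finset.Icc 1 k, (Q j).degree = (j : ℕ) → j ≤ j₀)
    (hdub : ∀ j : ℕ, j₀ < j → j ≤ k → Q j ≠ 0 →
      ((j : ℝ) - j₀) / ((j : ℝ) - (Q j).natDegree) ≤ d)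
    (hdmem : ∃ j : ℕ, j₀ < j ∧ j ≤ k ∧ Q j ≠ 0 ∧
      ((j : ℝ) - j₀) / ((j : ℝ) - (Q j).natDegree) = d) :
    0 < d ∧ ∃ js ∈ Finset.Icc 1 k, Q js ≠ 0 ∧ (Q js).natDegree < js ∧
      (js : ℝ) - d * (js - (Q js).natDegree) = j₀ ∧
      ∀ j ∈ Finset.Icc 1 k, Q j ≠ 0 → j ≠ js →
        (j : ℝ) - d * (j - (Q j).natDegree) ≤ j₀ ∧
        ((j : ℝ) - d * (j - (Q j).natDegree) < j₀ ∨
          (j : ℝ) - (Q j).natDegree < js - (Q js).natDegree) := by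
  classical
  have hpos {j : ℕ} (hj₀ : j₀ < j) (hjk : j ≤ k) (hQ : Q j ≠ 0) :
      (0 : ℝ) < j - (Q j).natDegree := by
    rw [sub_pos]; exact_mod_cast natDegree_lt_of_lt_of_degree_le hdegle hj₀max hj₀ hjk hQ
  obtain ⟨j₁, hj₁, hj₁k, hQj₁, hj₁d⟩ := hdmem
  have hd : 0 < d := hj₁d ▸ div_pos (by rw [sub_pos]; exact_mod_cast hj₁) (hpos hj₁ hj₁k hQj₁)
  have hle : ∀ j ∈ Finset.Icc 1 k, Q j ≠ 0 → (j : ℝ) - d * (j - (Q j).natDegree) ≤ j₀ := by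
    intro j hj hQ
    obtain ⟨-, hjk⟩ := Finset.mem_Icc.1 hj
    rcases le_or_gt j j₀ with hj₀ | hj₀
    · have : ((Q j).natDegree : ℝ) ≤ j := by exact_mod_cast natDegree_le_of_degree_le (hdegle j hj)
      have : (j : ℝ) ≤ j₀ := by exact_mod_cast hj₀
      nlinarith
    · have := (div_le_iff₀ (hpos hj₀ hjk hQ)).1 (hdub j hj₀ hjk hQ)
      linarith
  obtain ⟨js, hjs, hjs_eq, hjs_pos, hjs_max⟩ :=
    Finset.exists_sub_mul_eq_and_forall_lt (J := (Finset.Icc 1 k).filter (Q · ≠ 0))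
      (m := fun j ↦ (j : ℝ) - (Q j).natDegree) (d := d) (c := j₀)
      ⟨j₁, Finset.mem_filter.2 ⟨Finset.mem_Icc.2 ⟨by omega, hj₁k⟩, hQj₁⟩,
        by linarith [(div_eq_iff (hpos hj₁ hj₁k hQj₁).ne').1 hj₁d], hpos hj₁ hj₁k hQj₁⟩
  obtain ⟨hjsIcc, hQjs⟩ := Finset.mem_filter.1 hjs
  refine ⟨hd, js, hjsIcc, hQjs, by rw [sub_pos] at hjs_pos; exact_mod_cast hjs_pos, hjs_eq, ?_⟩
  intro j hj hQ hne
  refine ⟨hle j hj hQ, ?_⟩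
  rcases (hle j hj hQ).lt_or_eq with h | h
  · exact Or.inl h
  · exact Or.inr (hjs_max j (Finset.mem_filter.2 ⟨hj, hQ⟩) h hne)

theorem exists_dominant_term
    (hdegle : ∀ j ∈ Finset.Icc 1 k, (Q j).degree ≤ (j : ℕ))
    (hj₀max : ∀ j ∈ Finset.Icc 1 k, (Q j).degree = (j : ℕ) → j ≤ j₀)
    (hdub : ∀ j : ℕ, j₀ < j → j ≤ k → Q j ≠ 0 →
      ((j : ℝ) - j₀) / ((j : ℝ) - (Q j).natDegree) ≤ d)
    (hdmem : ∃ j : ℕ, j₀ < j ∧ j ≤ k ∧ Q j ≠ 0 ∧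
      ((j : ℝ) - j₀) / ((j : ℝ) - (Q j).natDegree) = d) :
    0 < d ∧ ∃ js ∈ Finset.Icc 1 k, Q js ≠ 0 ∧ ∀ ε : ℝ, 0 < ε → ε ≤ 1 →
      ∀ᶠ n : ℕ in atTop,
        (ε * (n : ℝ) ^ d) ^ k * (n : ℝ) ^ j₀ ≤
          ε * ((ε * (n : ℝ) ^ d) ^ ((Q js).natDegree + (k - js)) * (n : ℝ) ^ js) ∧
        ∀ j ∈ Finset.Icc 1 k, j ≠ js → Q j ≠ 0 →
          (ε * (n : ℝ) ^ d) ^ ((Q j).natDegree + (k - j)) * (n : ℝ) ^ j ≤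
            ε * ((ε * (n : ℝ) ^ d) ^ ((Q js).natDegree + (k - js)) * (n : ℝ) ^ js) := by
  obtain ⟨hd, js, hjs, hQjs, hts, hjs_eq, hdom⟩ := exists_dominant_index hdegle hj₀max hdub hdmem
  refine ⟨hd, js, hjs, hQjs, fun ε hε0 hε1 ↦ ?_⟩
  have hcast {j : ℕ} (hj : j ∈ Finset.Icc 1 k) :
      (((Q j).natDegree + (k - j) : ℕ) : ℝ) = (Q j).natDegree + k - j := by
    rw [Nat.cast_add, Nat.cast_sub (Finset.mem_Icc.1 hj).2]; ring
  have hts : ((Q js).natDegree : ℝ) < js := by exact_mod_cast hts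
  refine (eventually_mul_rpow_pow_mul_pow_le hε0 hε1 ?_ ?_).and ?_
  · rw [hcast hjs]; linarith
  · right; rw [← Nat.cast_lt (α := ℝ), hcast hjs]; linarith
  refine (Finset.eventually_all _).2 fun j hj ↦ ?_
  by_cases hj' : j = js
  · exact .of_forall fun _ h ↦ absurd hj' h
  by_cases hQ : Q j = 0
  · exact .of_forall fun _ _ h ↦ absurd hQ h
  obtain ⟨hle, hlt⟩ := hdom j hj hQ hj'
  refine (eventually_mul_rpow_pow_mul_pow_le hε0 hε1 ?_ ?_).mono fun _ h _ _ ↦ h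
  · rw [hcast hj, hcast hjs]; linarith
  · rw [← Nat.cast_lt (α := ℝ), hcast hj, hcast hjs]
    rcases hlt with hlt | hlt
    · left; linarith
    · right; linarith

end

theorem eigenvalue_eq_sum_coeff_mul_descFactorial {R : Type*} [CommRing R] {k : ℕ}
    {Q : ℕ → R[X]} {p : R[X]} {lam : R}
    (hdegle : ∀ j ∈ Finset.Icc 1 k, (Q j).degree ≤ (j : ℕ)) (hp : p.Monic) (hk : k ≤ p.natDegree)
    (heig : ∑ j ∈ Finset.Icc 1 k, Q j * derivative^[j] p = lam • p) :
    lam = ∑ j ∈ Finset.Icc 1 k, (Q j).coeff j * p.natDegree.descFactorial j := by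
  have h := congrArg (coeff · p.natDegree) heig
  simp only [finsetSum_coeff, coeff_smul, hp.coeff_natDegree, smul_eq_mul, mul_one] at h
  rw [← h]
  refine Finset.sum_congr rfl fun j hj ↦ ?_
  have hjn : j ≤ p.natDegree := (Finset.mem_Icc.1 hj).2.trans hk
  conv_lhs => rw [← Nat.add_sub_cancel' hjn]
  rw [coeff_mul_add_eq_of_natDegree_le (natDegree_le_of_degree_le (hdegle j hj))
    (natDegree_iterate_derivative p j), coeff_iterate_derivative, Nat.sub_add_cancel hjn,
    hp.coeff_natDegree, nsmul_one]

theorem norm_eigenvalue_le {R : Type*} [NormedCommRing R] [NormOneClass R] {k j₀ : ℕ}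
    {Q : ℕ → R[X]} {p : R[X]} {lam : R}
    (hdegle : ∀ j ∈ Finset.Icc 1 k, (Q j).degree ≤ (j : ℕ))
    (hj₀max : ∀ j ∈ Finset.Icc 1 k, (Q j).degree = (j : ℕ) → j ≤ j₀)
    (hp : p.Monic) (hk : k ≤ p.natDegree)
    (heig : ∑ j ∈ Finset.Icc 1 k, Q j * derivative^[j] p = lam • p) :
    ‖lam‖ ≤ (∑ j ∈ Finset.Icc 1 k, ‖(Q j).coeff j‖) * (p.natDegree : ℝ) ^ j₀ := by
  rw [eigenvalue_eq_sum_coeff_mul_descFactorial hdegle hp hk heig, Finset.sum_mul]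
  refine (norm_sum_le _ _).trans (Finset.sum_le_sum fun j hj ↦ ?_)
  refine (norm_mul_le _ _).trans ?_
  by_cases hc : (Q j).coeff j = 0
  · simp [hc]
  have hdeg : (Q j).degree = j :=
    le_antisymm (hdegle j hj) (le_degree_of_ne_zero hc)
  have hj : 1 ≤ j ∧ j ≤ k := Finset.mem_Icc.1 hj
  gcongr
  refine (Nat.norm_cast_le _).trans ?_
  rw [norm_one, mul_one]
  exact_mod_cast (Nat.descFactorial_le_pow _ j).trans
    (Nat.pow_le_pow_right (by omega : 0 < p.natDegree) (hj₀max j (Finset.mem_Icc.2 hj) hdeg))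

theorem norm_eval_mul_pow_mul_le_of_eigen {𝕜 : Type*} [NormedField 𝕜] {k js : ℕ}
    {Q : ℕ → 𝕜[X]} {p : 𝕜[X]} {lam : 𝕜}
    (heig : ∑ j ∈ Finset.Icc 1 k, Q j * derivative^[j] p = lam • p) (hjs : js ∈ Finset.Icc 1 k)
    (x : 𝕜) :
    ‖(Q js).eval x‖ * ‖x‖ ^ (k - js) * ‖x ^ js * (derivative^[js] p).eval x‖ ≤
      ‖lam‖ * ‖x‖ ^ k * ‖p.eval x‖ + ∑ j ∈ (Finset.Icc 1 k).erase js,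
        ‖(Q j).eval x‖ * ‖x‖ ^ (k - j) * ‖x ^ j * (derivative^[j] p).eval x‖ := by
  set f : ℕ → 𝕜 := fun j ↦ (Q j).eval x * x ^ (k - j) * (x ^ j * (derivative^[j] p).eval x)
  have hsum : ∑ j ∈ Finset.Icc 1 k, f j = lam * x ^ k * p.eval x := by
    have h := congrArg (eval x) heig
    simp only [eval_finsetSum, eval_mul, eval_smul, smul_eq_mul] at h
    rw [mul_right_comm, ← h, Finset.sum_mul]
    refine Finset.sum_congr rfl fun j hj ↦ ?_
    rw [← pow_sub_mul_pow x (Finset.mem_Icc.1 hj).2]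
    ring
  rw [← Finset.add_sum_erase _ _ hjs] at hsum
  have h := (norm_sub_le (lam * x ^ k * p.eval x) _).trans
    (add_le_add_right (norm_sum_le ((Finset.Icc 1 k).erase js) f) _)
  simpa only [← eq_sub_of_add_eq hsum, f, norm_mul, norm_pow] using h

theorem norm_leadingCoeff_le_of_norm_roots_le {k j₀ js : ℕ} {Q : ℕ → ℂ[X]} {p : ℂ[X]}
    {lam x : ℂ} {ε : ℝ}
    (hdegle : ∀ j ∈ Finset.Icc 1 k, (Q j).degree ≤ (j : ℕ))
    (hj₀max : ∀ j ∈ Finset.Icc 1 k, (Q j).degree = (j : ℕ) → j ≤ j₀)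
    (hp : p.Monic) (hkp : k ≤ p.natDegree)
    (heig : ∑ j ∈ Finset.Icc 1 k, Q j * derivative^[j] p = lam • p)
    (hjs : js ∈ Finset.Icc 1 k) (hx : 0 < ‖x‖) (hroots : ∀ a ∈ p.roots, 5 * k * ‖a‖ ≤ ‖x‖)
    (hQ : ∀ j ∈ Finset.Icc 1 k,
      ‖(Q j).eval x‖ ≤ 2 * (‖(Q j).leadingCoeff‖ * ‖x‖ ^ (Q j).natDegree))
    (hQjs : ‖(Q js).leadingCoeff‖ * ‖x‖ ^ (Q js).natDegree / 2 ≤ ‖(Q js).eval x‖)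
    (hfac : (p.natDegree : ℝ) ^ js / 2 ≤ p.natDegree.descFactorial js)
    (hscale_lam : ‖x‖ ^ k * (p.natDegree : ℝ) ^ j₀ ≤
      ε * (‖x‖ ^ ((Q js).natDegree + (k - js)) * (p.natDegree : ℝ) ^ js))
    (hscale : ∀ j ∈ Finset.Icc 1 k, j ≠ js → Q j ≠ 0 →
      ‖x‖ ^ ((Q j).natDegree + (k - j)) * (p.natDegree : ℝ) ^ j ≤
        ε * (‖x‖ ^ ((Q js).natDegree + (k - js)) * (p.natDegree : ℝ) ^ js)) :
    ‖(Q js).leadingCoeff‖ / 8 ≤ (∑ j ∈ Finset.Icc 1 k, ‖(Q j).coeff j‖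
      + 3 * ∑ j ∈ Finset.Icc 1 k, ‖(Q j).leadingCoeff‖) * ε := by
  have hk : 0 < k := by have := Finset.mem_Icc.1 hjs; omega
  have hn : (0 : ℝ) < p.natDegree := by exact_mod_cast hk.trans_le hkp
  have hP : 0 < ‖p.eval x‖ := by
    refine norm_pos_iff.2 fun h ↦ ?_
    have := hroots x ((mem_roots hp.ne_zero).2 h)
    have : (1 : ℝ) ≤ k := by exact_mod_cast hk
    nlinarith
  have hε : 0 < ε := pos_of_mul_pos_left
    ((by positivity : 0 < ‖x‖ ^ k * (p.natDegree : ℝ) ^ j₀).trans_le hscale_lam) (by positivity)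
  set n := p.natDegree
  set W : ℕ → ℂ := fun j ↦ x ^ j * (derivative^[j] p).eval x
  set D := ‖x‖ ^ ((Q js).natDegree + (k - js)) * (n : ℝ) ^ js * ‖p.eval x‖ with hD
  have hmain : ‖(Q js).leadingCoeff‖ / 8 * D ≤ ‖(Q js).eval x‖ * ‖x‖ ^ (k - js) * ‖W js‖ := calc
    _ = ‖(Q js).leadingCoeff‖ * ‖x‖ ^ (Q js).natDegree / 2 * ‖x‖ ^ (k - js) *
        ((n : ℝ) ^ js / 4 * ‖p.eval x‖) := by rw [hD, pow_add]; ring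
    _ ≤ _ := by
      gcongr
      exact hp.le_norm_pow_mul_eval_iterate_derivative hk hroots (Finset.mem_Icc.1 hjs).2 hfac
  have hlam : ‖lam‖ * ‖x‖ ^ k * ‖p.eval x‖ ≤ (∑ j ∈ Finset.Icc 1 k, ‖(Q j).coeff j‖) * ε * D := calc
    _ ≤ (∑ j ∈ Finset.Icc 1 k, ‖(Q j).coeff j‖) * (n : ℝ) ^ j₀ * ‖x‖ ^ k * ‖p.eval x‖ := by
      gcongr; exact norm_eigenvalue_le hdegle hj₀max hp hkp heig
    _ = (∑ j ∈ Finset.Icc 1 k, ‖(Q j).coeff j‖) * ‖p.eval x‖ * (‖x‖ ^ k * (n : ℝ) ^ j₀) := by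
      ring
    _ ≤ (∑ j ∈ Finset.Icc 1 k, ‖(Q j).coeff j‖) * ‖p.eval x‖ *
        (ε * (‖x‖ ^ ((Q js).natDegree + (k - js)) * (n : ℝ) ^ js)) := by gcongr
    _ = _ := by rw [hD]; ring
  have hterm : ∀ j ∈ (Finset.Icc 1 k).erase js,
      ‖(Q j).eval x‖ * ‖x‖ ^ (k - j) * ‖W j‖ ≤ 3 * ‖(Q j).leadingCoeff‖ * ε * D := by
    intro j hj
    obtain ⟨hjs', hj⟩ := Finset.mem_erase.1 hj
    by_cases hQ0 : Q j = 0
    · simp [hQ0, W]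
    calc _ ≤ 2 * (‖(Q j).leadingCoeff‖ * ‖x‖ ^ (Q j).natDegree) * ‖x‖ ^ (k - j) *
          (3 / 2 * ((n : ℝ) ^ j * ‖p.eval x‖)) := by
          gcongr
          exacts [hQ j hj,
            hp.norm_pow_mul_eval_iterate_derivative_le hk hroots (Finset.mem_Icc.1 hj).2]
      _ = 3 * ‖(Q j).leadingCoeff‖ * ‖p.eval x‖ *
          (‖x‖ ^ ((Q j).natDegree + (k - j)) * (n : ℝ) ^ j) := by rw [pow_add]; ring
      _ ≤ 3 * ‖(Q j).leadingCoeff‖ * ‖p.eval x‖ *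
          (ε * (‖x‖ ^ ((Q js).natDegree + (k - js)) * (n : ℝ) ^ js)) := by
          gcongr _ * ?_; exact hscale j hj hjs' hQ0
      _ = _ := by rw [hD]; ring
  have hsum : ∑ j ∈ (Finset.Icc 1 k).erase js, 3 * ‖(Q j).leadingCoeff‖ * ε * D ≤
      3 * (∑ j ∈ Finset.Icc 1 k, ‖(Q j).leadingCoeff‖) * ε * D := by
    rw [← Finset.sum_mul, ← Finset.sum_mul, ← Finset.mul_sum]
    gcongr
    exact Finset.erase_subset _ _
  have := hmain.trans <| (norm_eval_mul_pow_mul_le_of_eigen heig hjs x).trans <|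
    add_le_add hlam ((Finset.sum_le_sum hterm).trans hsum)
  exact le_of_mul_le_mul_right (by linarith) (by rw [hD]; positivity : 0 < D)

theorem stmt12_general (k : ℕ) (Q : ℕ → Polynomial ℂ)
    (hdegle : ∀ j ∈ Finset.Icc 1 k, (Q j).degree ≤ (j : ℕ))
    (j₀ : ℕ) (hj₀max : ∀ j ∈ Finset.Icc 1 k, (Q j).degree = (j : ℕ) → j ≤ j₀)
    (d : ℝ)
    (hdub : ∀ j : ℕ, j₀ < j → j ≤ k → Q j ≠ 0 →
      ((j : ℝ) - j₀) / ((j : ℝ) - (Q j).natDegree) ≤ d)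
    (hdmem : ∃ j : ℕ, j₀ < j ∧ j ≤ k ∧ Q j ≠ 0 ∧
      ((j : ℝ) - j₀) / ((j : ℝ) - (Q j).natDegree) = d)
    (p : ℕ → Polynomial ℂ) (lam : ℕ → ℂ)
    (hmonic : ∀ n, (p n).Monic) (hdeg : ∀ n, (p n).natDegree = n)
    (heig : ∀ n, ∑ j ∈ Finset.Icc 1 k, Q j * Polynomial.derivative^[j] (p n)
      = lam n • p n) :
    ∃ s : ℝ, 0 < s ∧ ∃ N : ℕ, ∀ n : ℕ, N ≤ n →
      ∃ α ∈ (p n).roots, s * (n : ℝ) ^ d < ‖α‖ := by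
  obtain ⟨hd, js, hjs, hQjs, hdom⟩ := exists_dominant_term hdegle hj₀max hdub hdmem
  set A := ∑ j ∈ Finset.Icc 1 k, ‖(Q j).coeff j‖
  set B := ∑ j ∈ Finset.Icc 1 k, ‖(Q j).leadingCoeff‖
  obtain ⟨ε, hε0, hε1, hε⟩ :
      ∃ ε : ℝ, 0 < ε ∧ ε ≤ 1 ∧ (A + 3 * B) * ε < ‖(Q js).leadingCoeff‖ / 8 := by
    obtain ⟨c, hc0, hc⟩ := exists_pos_mul_lt
      (by simpa using hQjs : 0 < ‖(Q js).leadingCoeff‖ / 8) (A + 3 * B)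
    exact ⟨min c 1, by positivity, min_le_right c 1,
      (mul_le_mul_of_nonneg_left (min_le_left c 1) (by positivity)).trans_lt hc⟩
  have hk : 0 < k := by have := Finset.mem_Icc.1 hjs; omega
  refine ⟨ε / (5 * k), by positivity, eventually_atTop.1 ?_⟩
  set x : ℕ → ℂ := fun n ↦ ((ε * (n : ℝ) ^ d : ℝ) : ℂ)
  have hx (n : ℕ) : ‖x n‖ = ε * (n : ℝ) ^ d := by
    simp only [x, Complex.norm_real, Real.norm_eq_abs]; exact abs_of_nonneg (by positivity)
  have hx_tendsto : Tendsto x atTop (cobounded ℂ) := by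
    refine tendsto_norm_atTop_iff_cobounded.1 ?_
    simp only [hx]
    exact ((tendsto_rpow_atTop hd).comp tendsto_natCast_atTop_atTop).const_mul_atTop hε0
  filter_upwards [eventually_ge_atTop k, Nat.eventually_pow_div_two_le_descFactorial js,
    hdom ε hε0 hε1, hx_tendsto.eventually <| (Finset.eventually_all _).2 fun j _ ↦
      (Q j).eventually_norm_eval_le_and_le] with n hkn hfac ⟨hscale_lam, hscale⟩ hQ
  by_contra! hroots
  have hn : (0 : ℝ) < n := by exact_mod_cast hk.trans_le hkn
  have := norm_leadingCoeff_le_of_norm_roots_le hdegle hj₀max (hmonic n) (by rwa [hdeg n])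
    (heig n) hjs (by rw [hx]; positivity)
    (fun a ha ↦ by rw [hx]; have := hroots a ha; field_simp at this ⊢; linarith)
    (fun j hj ↦ (hQ j hj).2) (hQ js hjs).1 (by rwa [hdeg n]) (by rwa [hdeg n, hx])
    (by simpa only [hdeg n, hx] using hscale)
  linarith

theorem stmt12 (k : ℕ) (hk : 1 ≤ k) (Q : ℕ → Polynomial ℂ)
    (hdegle : ∀ j ∈ Finset.Icc 1 k, (Q j).degree ≤ (j : ℕ))
    (hdegk : (Q k).degree < (k : ℕ))
    (j₀ : ℕ) (hj₀mem : j₀ ∈ Finset.Icc 1 k) (hj₀deg : (Q j₀).degree = (j₀ : ℕ))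
    (hj₀max : ∀ j ∈ Finset.Icc 1 k, (Q j).degree = (j : ℕ) → j ≤ j₀)
    (d : ℝ)
    (hdub : ∀ j : ℕ, j₀ < j → j ≤ k → Q j ≠ 0 →
      ((j : ℝ) - j₀) / ((j : ℝ) - (Q j).natDegree) ≤ d)
    (hdmem : ∃ j : ℕ, j₀ < j ∧ j ≤ k ∧ Q j ≠ 0 ∧
      ((j : ℝ) - j₀) / ((j : ℝ) - (Q j).natDegree) = d)
    (p : ℕ → Polynomial ℂ) (lam : ℕ → ℂ)
    (hmonic : ∀ n, (p n).Monic) (hdeg : ∀ n, (p n).natDegree = n)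
    (heig : ∀ n, ∑ j ∈ Finset.Icc 1 k, Q j * Polynomial.derivative^[j] (p n)
      = lam n • p n) :
    ∃ s : ℝ, 0 < s ∧ ∃ N : ℕ, ∀ n : ℕ, N ≤ n →
      ∃ α ∈ (p n).roots, s * (n : ℝ) ^ d < ‖α‖ :=
  stmt12_general k Q hdegle j₀ hj₀max d hdub hdmem p lam hmonic hdeg heig
end
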